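/- Let H be a complex Hilbert space and K a bounded operator on H with K∘K = 1; set ρ(x) := K∘x∘K and [T, a]_ρ := T∘a − ρ(a)∘T. Then for every linear map D : H → H and all bounded operators a, b on H: [[K∘D, a]_ρ, b]_ρ = K∘[[D, a], b] and [[K∘D, a], b] = K∘[[D, a]_ρ, b]_ρ; in particular, the first-order condition [[D,a],b] = 0 holds if and only if the twisted first-order condition [[K∘D, a]_ρ, b]_ρ = 0 holds, and likewise [[K∘D,a],b] = 0 if and only if [[D,a]_ρ,b]_ρ = 0. -/
import Mathlib


open ContinuousLinearMap

/-- The twisted commutator `[T, a]_ρ = T ∘ a − ρ(a) ∘ T` with `ρ(a) = K ∘ a ∘ K`, for a linear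
map `T : H → H` (possibly unbounded) and a bounded operator `a`. -/
def tcomm {H : Type*} [NormedAddCommGroup H] [InnerProductSpace ℂ H]
    (K : H →L[ℂ] H) (T : H →ₗ[ℂ] H) (a : H →L[ℂ] H) : H →ₗ[ℂ] H :=
  T ∘ₗ (a : H →ₗ[ℂ] H) - ((K ∘L a ∘L K : H →L[ℂ] H) : H →ₗ[ℂ] H) ∘ₗ T

/-- The ordinary commutator `[T, a] = T ∘ a − a ∘ T`. -/
def ucomm {H : Type*} [NormedAddCommGroup H] [InnerProductSpace ℂ H]
    (T : H →ₗ[ℂ] H) (a : H →L[ℂ] H) : H →ₗ[ℂ] H :=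
  T ∘ₗ (a : H →ₗ[ℂ] H) - (a : H →ₗ[ℂ] H) ∘ₗ T

/-- For `K ∘ K = 1` and `ρ(x) = K ∘ x ∘ K`:
`[[K∘D, a]_ρ, b]_ρ = K ∘ [[D, a], b]` and `[[K∘D, a], b] = K ∘ [[D, a]_ρ, b]_ρ`; in particular,
the first-order condition holds iff the twisted first-order condition for `K∘D` holds, and
conversely. -/
theorem first_order_condition_connection
    {H : Type*} [NormedAddCommGroup H] [InnerProductSpace ℂ H] [CompleteSpace H]
    (K : H →L[ℂ] H) (hK2 : K ∘L K = 1)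
    (D : H →ₗ[ℂ] H) (a b : H →L[ℂ] H) :
    (tcomm K (tcomm K ((K : H →ₗ[ℂ] H) ∘ₗ D) a) b = (K : H →ₗ[ℂ] H) ∘ₗ ucomm (ucomm D a) b) ∧
    (ucomm (ucomm ((K : H →ₗ[ℂ] H) ∘ₗ D) a) b = (K : H →ₗ[ℂ] H) ∘ₗ tcomm K (tcomm K D a) b) ∧
    (ucomm (ucomm D a) b = 0 ↔ tcomm K (tcomm K ((K : H →ₗ[ℂ] H) ∘ₗ D) a) b = 0) ∧
    (ucomm (ucomm ((K : H →ₗ[ℂ] H) ∘ₗ D) a) b = 0 ↔ tcomm K (tcomm K D a) b = 0) := by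
  have hK : ∀ x, K (K x) = x := fun x => by
    have := ContinuousLinearMap.ext_iff.mp hK2 x
    simpa using this
  have h1 : tcomm K (tcomm K ((K : H →ₗ[ℂ] H) ∘ₗ D) a) b
      = (K : H →ₗ[ℂ] H) ∘ₗ ucomm (ucomm D a) b := by
    ext x
    simp [tcomm, ucomm, hK, map_sub]
  have h2 : ucomm (ucomm ((K : H →ₗ[ℂ] H) ∘ₗ D) a) b
      = (K : H →ₗ[ℂ] H) ∘ₗ tcomm K (tcomm K D a) b := by
    ext x
    simp [tcomm, ucomm, hK, map_sub]
  have hinj : ∀ S : H →ₗ[ℂ] H, (K : H →ₗ[ℂ] H) ∘ₗ S = 0 ↔ S = 0 := by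
    intro S
    constructor
    · intro h
      ext x
      have h0 : K (S x) = 0 := by
        have := LinearMap.congr_fun h x
        simpa using this
      have := congrArg K h0
      simpa [hK] using this
    · rintro rfl
      ext x
      simp
  refine ⟨h1, h2, ?_, ?_⟩
  · rw [h1, hinj]
  · rw [h2, hinj]
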